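/- arXiv:2303.05878 — 5 statements merged into one kernel-verified Lean document; each statement's English description precedes it below -/
import Mathlib

section
/- Suppose two parameter vectors θ and θ' induce joint distributions for (A, C, Y, R) both satisfying treatment-independent missingness R ⊥ A | (C,Y) and positivity pr(R=1|a,c,y) > 0. If there exists a set F of positive probability such that for all (a,c,y) ∈ F the likelihood ratio pr(a,y|c;θ)/pr(a,y|c;θ') is not expressible as a function h(c,y) of (c,y) alone, then the observed-data distributions pr(a,c,y,R=1;θ) and pr(a,c,y,R=1;θ') are not identical, i.e., the parameter distinguishing θ from θ' is identifiable from the observed data. -/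
/-! If the observed densities `pr(c) · pr(a,y|c) · pr(R=1|c,y)` agreed at a point, the likelihood
ratio there would equal `pr(c;θ') pr(R=1|c,y;θ') / (pr(c;θ) pr(R=1|c,y;θ))`, which depends on
`(c,y)` only; treatment-independent missingness is what keeps `a` out of this quotient. -/

theorem div_eq_div_of_mul_mul_eq {K : Type*} [Field K] {a b c a' b' c' : K}
    (ha : a ≠ 0) (hc : c ≠ 0) (hb' : b' ≠ 0) (h : a * b * c = a' * b' * c') :
    b / b' = a' * c' / (a * c) := by
  rw [div_eq_div_iff hb' (mul_ne_zero ha hc)]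
  linear_combination h

theorem identifiability_from_likelihood_ratio_general
    {γ υ : Type*} [MeasurableSpace γ] [MeasurableSpace υ]
    (ν : MeasureTheory.Measure (Bool × γ × υ))
    (prAY prAY' : Bool → γ → υ → ℝ)   -- pr(a,y|c;θ) and pr(a,y|c;θ')
    (prC prC' : γ → ℝ)                -- pr(c;θ) and pr(c;θ')
    (πR πR' : γ → υ → ℝ)              -- pr(R=1|c,y;θ) and pr(R=1|c,y;θ'), independent of a
    (hπpos : ∀ c y, 0 < πR c y)
    (hCpos : ∀ c, 0 < prC c)
    (hAY'pos : ∀ a c y, 0 < prAY' a c y)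
    (hratio : ∀ h : γ → υ → ℝ, ∃ F : Set (Bool × γ × υ), ν F ≠ 0 ∧
      ∀ p ∈ F, prAY p.1 p.2.1 p.2.2 / prAY' p.1 p.2.1 p.2.2 ≠ h p.2.1 p.2.2) :
    ∃ F : Set (Bool × γ × υ), ν F ≠ 0 ∧
      ∀ p ∈ F,
        prC p.2.1 * prAY p.1 p.2.1 p.2.2 * πR p.2.1 p.2.2 ≠
          prC' p.2.1 * prAY' p.1 p.2.1 p.2.2 * πR' p.2.1 p.2.2 := by
  obtain ⟨F, hF, hne⟩ := hratio fun c y => prC' c * πR' c y / (prC c * πR c y)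
  refine ⟨F, hF, fun ⟨a, c, y⟩ hp heq => hne _ hp ?_⟩
  exact div_eq_div_of_mul_mul_eq (hCpos c).ne' (hπpos c y).ne' (hAY'pos a c y).ne' heq

/-- Proposition 1: Two parameter values `θ, θ'` induce joint densities
factored as `pr(a,c,y,R=1) = pr(c) · pr(a,y|c) · pr(R=1|c,y)`, where the missing
probability depends only on `(c,y)` (treatment-independent missingness) and is positive.
If for every function `h(c,y)` there is a set `F` of positive measure on which the
likelihood ratio `pr(a,y|c;θ)/pr(a,y|c;θ')` differs from `h(c,y)`, then the
observed-data distributions at `R=1` differ on a set of positive measure. -/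
theorem identifiability_from_likelihood_ratio
    {γ υ : Type*} [MeasurableSpace γ] [MeasurableSpace υ]
    (ν : MeasureTheory.Measure (Bool × γ × υ))
    (prAY prAY' : Bool → γ → υ → ℝ)   -- pr(a,y|c;θ) and pr(a,y|c;θ')
    (prC prC' : γ → ℝ)                -- pr(c;θ) and pr(c;θ')
    (πR πR' : γ → υ → ℝ)              -- pr(R=1|c,y;θ) and pr(R=1|c,y;θ'), independent of a
    (hπpos : ∀ c y, 0 < πR c y) (hπ'pos : ∀ c y, 0 < πR' c y)
    (hCpos : ∀ c, 0 < prC c) (hC'pos : ∀ c, 0 < prC' c)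
    (hAYpos : ∀ a c y, 0 < prAY a c y) (hAY'pos : ∀ a c y, 0 < prAY' a c y)
    (hratio : ∀ h : γ → υ → ℝ, ∃ F : Set (Bool × γ × υ), ν F ≠ 0 ∧
      ∀ p ∈ F, prAY p.1 p.2.1 p.2.2 / prAY' p.1 p.2.1 p.2.2 ≠ h p.2.1 p.2.2) :
    ∃ F : Set (Bool × γ × υ), ν F ≠ 0 ∧
      ∀ p ∈ F,
        prC p.2.1 * prAY p.1 p.2.1 p.2.2 * πR p.2.1 p.2.2 ≠
          prC' p.2.1 * prAY' p.1 p.2.1 p.2.2 * πR' p.2.1 p.2.2 :=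
  identifiability_from_likelihood_ratio_general ν prAY prAY' prC prC' πR πR' hπpos hCpos hAY'pos
    hratio
end

section
/- For a binary treatment A, if the odds-ratio-type functional [pr(y|A=1,c;θ)·pr(A=1|c;θ)] / [pr(y|A=0,c;θ)·pr(A=0|c;θ)] agreeing for all (y,c) between θ and θ' implies θᵢ = θᵢ', then θᵢ is identifiable from the observed-data distribution under treatment-independent missingness. -/
/-- Proposition 2: For a binary treatment, with the joint observed-data
density at `R=1` factored as `pr(c;θ)·pr(y|a,c;θ)·pr(a|c;θ)·pr(R=1|c,y;θ)` under
treatment-independent missingness, if equality for all `(y,c)` of the odds-ratio-type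
functional `[pr(y|A=1,c;θ)·pr(A=1|c;θ)] / [pr(y|A=0,c;θ)·pr(A=0|c;θ)]` between `θ` and
`θ'` implies `θᵢ(θ) = θᵢ(θ')`, then `θᵢ` is identifiable: equal observed-data
distributions imply equal values of `θᵢ`. -/
theorem odds_ratio_identifiability
    {Θ γ υ : Type*}
    (prC : Θ → γ → ℝ)                 -- pr(c;θ)
    (prY : Θ → υ → Bool → γ → ℝ)      -- pr(y|a,c;θ)
    (prA : Θ → Bool → γ → ℝ)          -- pr(a|c;θ)
    (πR : Θ → γ → υ → ℝ)              -- pr(R=1|c,y;θ), treatment-independent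
    (θi : Θ → ℝ)                      -- the parameter of interest
    (hCpos : ∀ θ c, 0 < prC θ c)
    (hYpos : ∀ θ y a c, 0 < prY θ y a c)
    (hApos : ∀ θ a c, 0 < prA θ a c)
    (hπpos : ∀ θ c y, 0 < πR θ c y)
    (hnec : ∀ θ θ' : Θ,
      (∀ (y : υ) (c : γ),
        (prY θ y true c * prA θ true c) / (prY θ y false c * prA θ false c) =
          (prY θ' y true c * prA θ' true c) / (prY θ' y false c * prA θ' false c)) →
      θi θ = θi θ') :
    ∀ θ θ' : Θ,
      (∀ (a : Bool) (c : γ) (y : υ),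
        prC θ c * prY θ y a c * prA θ a c * πR θ c y =
          prC θ' c * prY θ' y a c * prA θ' a c * πR θ' c y) →
      θi θ = θi θ' := by
  intro θ θ' h
  apply hnec
  intro y c
  have h1 := h true c y
  have h0 := h false c y
  have hB : prY θ y false c * prA θ false c ≠ 0 :=
    (mul_pos (hYpos θ y false c) (hApos θ false c)).ne'
  have hB' : prY θ' y false c * prA θ' false c ≠ 0 :=
    (mul_pos (hYpos θ' y false c) (hApos θ' false c)).ne'
  rw [div_eq_div_iff hB hB']
  have hX : prC θ c * πR θ c y * (prC θ' c * πR θ' c y) ≠ 0 :=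
    (mul_pos (mul_pos (hCpos θ c) (hπpos θ c y))
      (mul_pos (hCpos θ' c) (hπpos θ' c y))).ne'
  apply mul_left_cancel₀ hX
  linear_combination (prC θ' c * πR θ' c y * (prY θ' y false c * prA θ' false c)) * h1 -
    (prC θ' c * πR θ' c y * (prY θ' y true c * prA θ' true c)) * h0
end

section
/- Let W have the standard extreme value (Gumbel) distribution with density f(w) = exp(-w - e^{-w}) on ℝ. Then for constants b, b' ∈ ℝ and σ, σ' > 0, the ratio of the densities of b + σW and b' + σ'W is constant in its argument if and only if b = b' and σ = σ'. -/
/-- The density of `b + σ·W` where `W` has the standard extreme value (Gumbel)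
distribution with density `f(w) = exp(-w - e^{-w})`. -/
noncomputable def gumbelLocScalePdf (b s x : ℝ) : ℝ :=
  (1 / s) * Real.exp (-((x - b) / s) - Real.exp (-((x - b) / s)))

lemma gumbel_pos (b s x : ℝ) (hs : 0 < s) : 0 < gumbelLocScalePdf b s x := by
  unfold gumbelLocScalePdf; positivity

/-- For `b, b' ∈ ℝ` and `σ, σ' > 0`, the ratio of the densities of
`b + σW` and `b' + σ'W` (with `W` standard Gumbel) is constant in its argument
if and only if `b = b'` and `σ = σ'`. -/
theorem gumbel_density_ratio_constant_iff
    (b b' s s' : ℝ) (hs : 0 < s) (hs' : 0 < s') :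
    (∃ k : ℝ, ∀ x : ℝ, gumbelLocScalePdf b s x / gumbelLocScalePdf b' s' x = k) ↔
      (b = b' ∧ s = s') := by
  constructor
  · rintro ⟨k, hk⟩
    have hkpos : 0 < k := by
      have := hk 0
      rw [← this]
      exact div_pos (gumbel_pos b s 0 hs) (gumbel_pos b' s' 0 hs')
    set c : ℝ := Real.log k + Real.log s - Real.log s' with hc
    have key : ∀ x : ℝ,
        (1/s' - 1/s) * x + (b/s - b'/s')
          + (Real.exp (-((x - b') / s')) - Real.exp (-((x - b) / s))) = c := by
      intro x
      have h1 := hk x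
      have hq := gumbel_pos b' s' x hs'
      have h2 : gumbelLocScalePdf b s x = k * gumbelLocScalePdf b' s' x :=
        (div_eq_iff hq.ne').mp h1
      unfold gumbelLocScalePdf at h2
      have hl := congrArg Real.log h2
      rw [Real.log_mul (by positivity) (Real.exp_ne_zero _), Real.log_exp,
        Real.log_mul hkpos.ne' (by positivity),
        Real.log_mul (by positivity) (Real.exp_ne_zero _), Real.log_exp,
        one_div, one_div, Real.log_inv, Real.log_inv] at hl
      have e1 : (x - b') / s' = (1/s') * x - b'/s' := by ring
      have e2 : (x - b) / s = (1/s) * x - b/s := by ring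
      rw [e1, e2] at hl ⊢
      linarith [hl]
    have hss : s = s' := by
      by_contra hne
      have ha : (1/s' - 1/s) ≠ 0 := by
        intro h
        apply hne
        have : (1:ℝ)/s' = 1/s := by linarith
        field_simp at this
        linarith
      set a : ℝ := 1/s' - 1/s with hadef
      set d : ℝ := b/s - b'/s' with hddef
      clear_value a d
      clear_value c
      -- bounds for x ≥ max b b'
      have hbound : ∀ x : ℝ, max b b' ≤ x → c - d - 1 < a * x ∧ a * x < c - d + 1 := by
        intro x hx
        have hx1 : b ≤ x := le_trans (le_max_left _ _) hx
        have hx2 : b' ≤ x := le_trans (le_max_right _ _) hx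
        have he1 : Real.exp (-((x - b') / s')) ≤ 1 := by
          rw [Real.exp_le_one_iff]
          have : 0 ≤ (x - b') / s' := div_nonneg (by linarith) hs'.le
          linarith
        have he2 : Real.exp (-((x - b) / s)) ≤ 1 := by
          rw [Real.exp_le_one_iff]
          have : 0 ≤ (x - b) / s := div_nonneg (by linarith) hs.le
          linarith
        have hp1 : 0 < Real.exp (-((x - b') / s')) := Real.exp_pos _
        have hp2 : 0 < Real.exp (-((x - b) / s)) := Real.exp_pos _
        have := key x
        constructor <;> linarith
      set x1 : ℝ := max (max b b') 0 with hx1def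
      have hx1M : max b b' ≤ x1 := le_max_left _ _
      clear_value x1
      have hx2M : max b b' ≤ x1 + 2 / |a| := by
        have : 0 < 2 / |a| := by positivity
        linarith
      obtain ⟨hA1, hA2⟩ := hbound x1 hx1M
      obtain ⟨hB1, hB2⟩ := hbound (x1 + 2 / |a|) hx2M
      rcases lt_or_gt_of_ne ha with hneg | hpos
      · have h2 : a * (2 / |a|) = -2 := by
          rw [abs_of_neg hneg, div_neg]
          rw [mul_neg, neg_eq_iff_eq_neg]
          field_simp
        have h3 : a * (x1 + 2 / |a|) = a * x1 - 2 := by rw [mul_add, h2]; ring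
        linarith
      · have h2 : a * (2 / |a|) = 2 := by
          rw [abs_of_pos hpos]
          field_simp
        have h3 : a * (x1 + 2 / |a|) = a * x1 + 2 := by rw [mul_add, h2]
        linarith
    subst hss
    refine ⟨?_, rfl⟩
    -- now key : (b/s - b'/s) + (exp(-(x-b')/s) - exp(-(x-b)/s)) = c
    have key2 : ∀ x : ℝ,
        Real.exp (-x/s) * (Real.exp (b'/s) - Real.exp (b/s)) = c - (b/s - b'/s) := by
      intro x
      have h := key x
      have e1 : Real.exp (-((x - b') / s)) = Real.exp (-x/s) * Real.exp (b'/s) := by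
        rw [← Real.exp_add]; congr 1; field_simp; ring
      have e2 : Real.exp (-((x - b) / s)) = Real.exp (-x/s) * Real.exp (b/s) := by
        rw [← Real.exp_add]; congr 1; field_simp; ring
      rw [e1, e2] at h
      ring_nf at h ⊢
      linarith
    have h0 := key2 0
    have h1 := key2 (s * Real.log 2)
    have hsim : -(s * Real.log 2) / s = -Real.log 2 := by
      field_simp
    rw [hsim, Real.exp_neg, Real.exp_log (by norm_num : (0:ℝ) < 2)] at h1
    rw [neg_zero, zero_div, Real.exp_zero, one_mul] at h0
    have hK : Real.exp (b'/s) = Real.exp (b/s) := by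
      rw [h0] at h1
      nlinarith [h0, h1]
    have hbb : b'/s = b/s := Real.exp_injective hK
    rw [div_eq_div_iff hs.ne' hs.ne'] at hbb
    exact (mul_right_cancel₀ hs.ne' hbb).symm
  · rintro ⟨rfl, rfl⟩
    exact ⟨1, fun x => div_self (gumbel_pos b s x hs).ne'⟩
end

section
/- Suppose E[R | A, C, Y] = π(C,Y) > 0 a.s., the propensity score e(C) = pr(A=1 | C) satisfies 0 < e(C) < 1 a.s., Y = A·Y(1) + (1−A)·Y(0), and (Y(1),Y(0)) ⊥ A | C. Then E[ (R/π(C,Y)) · (A·Y)/e(C) ] = E[Y(1)] and E[ (R/π(C,Y)) · ((1−A)·Y)/(1−e(C)) ] = E[Y(0)]. -/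
open MeasureTheory ProbabilityTheory Set MeasurableSpace

/-!
Write `m` for `σ(A, C, Y)`. For an `m`-measurable `g`, the conditional expectation of
`R / E[R | m] * g` given `m` is `g`, so the missingness weight integrates out. Conditional
independence of `Y(b)` and `A` given `C` means that `P(A = b | C, Y(b)) = P(A = b | C)` (it
suffices to compare integrals over the π-system of sets `u ∩ v` with `u ∈ σ(C)`,
`v ∈ σ(Y(b))`), so the same cancellation, now for `σ(C) ⊔ σ(Y(b))`, turns
`E[1{A = b} Y(b) / P(A = b | C)]` into `E[Y(b)]`. On `{A = b}` consistency replaces `Y` by `Y(b)`.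
-/

lemma IsPiSystem.image2_inter {α : Type*} {C D : Set (Set α)} (hC : IsPiSystem C)
    (hD : IsPiSystem D) : IsPiSystem (image2 (· ∩ ·) C D) := by
  rintro _ ⟨s₁, hs₁, t₁, ht₁, rfl⟩ _ ⟨s₂, hs₂, t₂, ht₂, rfl⟩ hst
  rw [inter_inter_inter_comm] at hst ⊢
  exact mem_image2_of_mem (hC _ hs₁ _ hs₂ (hst.mono inter_subset_left))
    (hD _ ht₁ _ ht₂ (hst.mono inter_subset_right))

lemma MeasurableSpace.sup_eq_generateFrom_image2_inter {α : Type*} (m₁ m₂ : MeasurableSpace α) :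
    m₁ ⊔ m₂ =
      generateFrom (image2 (· ∩ ·) {s | MeasurableSet[m₁] s} {s | MeasurableSet[m₂] s}) := by
  refine le_antisymm (sup_le (fun s hs => ?_) (fun s hs => ?_)) (generateFrom_le ?_)
  · exact measurableSet_generateFrom ⟨s, hs, univ, .univ, inter_univ s⟩
  · exact measurableSet_generateFrom ⟨univ, .univ, s, hs, univ_inter s⟩
  · rintro _ ⟨u, hu, v, hv, rfl⟩
    exact (le_sup_left (a := m₁) u hu).inter (le_sup_right (a := m₁) v hv)

namespace MeasureTheory

theorem setIntegral_eq_of_isPiSystem {α E : Type*} [NormedAddCommGroup E]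
    [NormedSpace ℝ E] {m mα : MeasurableSpace α} {μ : Measure α} {f g : α → E} (hm : m ≤ mα)
    {S : Set (Set α)} (h_eq : m = generateFrom S) (h_inter : IsPiSystem S)
    (hf : Integrable f μ) (hg : Integrable g μ)
    (basic : ∀ s ∈ S, ∫ x in s, f x ∂μ = ∫ x in s, g x ∂μ)
    (h_univ : ∫ x, f x ∂μ = ∫ x, g x ∂μ) {s : Set α} (hs : MeasurableSet[m] s) :
    ∫ x in s, f x ∂μ = ∫ x in s, g x ∂μ := by
  induction s, hs using MeasurableSpace.induction_on_inter h_eq h_inter with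
  | empty => simp
  | basic s hs => exact basic s hs
  | compl s hs ih =>
    rw [setIntegral_compl (hm s hs) hf, setIntegral_compl (hm s hs) hg, ih, h_univ]
  | iUnion s hd hs ih =>
    rw [integral_iUnion (fun i => hm _ (hs i)) hd hf.integrableOn,
      integral_iUnion (fun i => hm _ (hs i)) hd hg.integrableOn]
    exact tsum_congr ih

variable {Ω : Type*} {m mΩ : MeasurableSpace Ω} {μ : Measure Ω}

lemma le_and_integrable_of_ae_condExp_pos [NeZero μ] {f : Ω → ℝ}
    (h : ∀ᵐ ω ∂μ, 0 < μ[f | m] ω) : m ≤ mΩ ∧ Integrable f μ := by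
  refine ⟨?_, ?_⟩ <;> by_contra hc
  · exact NeZero.ne μ (by simpa [condExp_of_not_le hc] using h)
  · exact NeZero.ne μ (by simpa [condExp_of_not_integrable hc] using h)

lemma condExp_indicator_compl [IsFiniteMeasure μ] (hm : m ≤ mΩ) {s : Set Ω}
    (hs : MeasurableSet s) : μ⟦sᶜ | m⟧ =ᵐ[μ] 1 - μ⟦s | m⟧ := by
  rw [indicator_compl]
  filter_upwards [condExp_sub (integrable_const (1 : ℝ)) ((integrable_const 1).indicator hs) m]
    with ω hω
  simp [hω, condExp_const hm]

lemma condExp_div_condExp_mul_ae_eq {R g : Ω → ℝ} (hg : StronglyMeasurable[m] g)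
    (hR : Integrable R μ) (hpos : ∀ᵐ ω ∂μ, 0 < μ[R | m] ω)
    (hint : Integrable (fun ω => R ω / μ[R | m] ω * g ω) μ) :
    μ[fun ω => R ω / μ[R | m] ω * g ω | m] =ᵐ[μ] g := by
  have hcomm : (fun ω => R ω / μ[R | m] ω * g ω) = g / μ[R | m] * R := by
    ext ω; simp only [Pi.mul_apply, Pi.div_apply]; ring
  rw [hcomm] at hint ⊢
  filter_upwards [condExp_mul_of_stronglyMeasurable_left
    (hg.div stronglyMeasurable_condExp) hint hR, hpos] with ω h hω
  rw [h, Pi.mul_apply, Pi.div_apply, div_mul_cancel₀ _ hω.ne']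

lemma integral_div_condExp_mul (hm : m ≤ mΩ) [SigmaFinite (μ.trim hm)] {R g : Ω → ℝ}
    (hg : StronglyMeasurable[m] g) (hR : Integrable R μ) (hpos : ∀ᵐ ω ∂μ, 0 < μ[R | m] ω)
    (hint : Integrable (fun ω => R ω / μ[R | m] ω * g ω) μ) :
    ∫ ω, R ω / μ[R | m] ω * g ω ∂μ = ∫ ω, g ω ∂μ :=
  (integral_condExp hm).symm.trans
    (integral_congr_ae (condExp_div_condExp_mul_ae_eq hg hR hpos hint))

end MeasureTheory

namespace ProbabilityTheory

variable {Ω : Type*} {m' m₁ m₂ mΩ : MeasurableSpace Ω} [StandardBorelSpace Ω] {μ : Measure Ω}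
  [IsFiniteMeasure μ] {hm' : m' ≤ mΩ}

lemma ae_trim_ae_condExpKernel {p : Ω → Prop} (h : ∀ᵐ ω ∂μ, p ω) :
    ∀ᵐ ω ∂(μ.trim hm'), ∀ᵐ ω' ∂(condExpKernel μ m' ω), p ω' := by
  apply Measure.ae_ae_of_ae_comp
  rwa [condExpKernel_comp_trim hm']

lemma CondIndepFun.congr_ae {β γ : Type*} [MeasurableSpace β] [MeasurableSpace γ]
    {f f' : Ω → β} {g g' : Ω → γ} (h : CondIndepFun m' hm' f g μ) (hf : f =ᵐ[μ] f')
    (hg : g =ᵐ[μ] g') : CondIndepFun m' hm' f' g' μ :=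
  Kernel.IndepFun.congr' h (ae_trim_ae_condExpKernel hf) (ae_trim_ae_condExpKernel hg)

lemma CondIndep.condExp_indicator_sup_ae_eq (h : CondIndep m' m₁ m₂ hm' μ) (hm₁ : m₁ ≤ mΩ)
    (hm₂ : m₂ ≤ mΩ) {t : Set Ω} (ht : MeasurableSet[m₂] t) :
    μ⟦t | m' ⊔ m₁⟧ =ᵐ[μ] μ⟦t | m'⟧ := by
  have hsup : m' ⊔ m₁ ≤ mΩ := sup_le hm' hm₁
  have hI : Integrable (t.indicator fun _ => (1 : ℝ)) μ :=
    (integrable_const 1).indicator (hm₂ t ht)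
  have hmul := (condIndep_iff m' m₁ m₂ hm' hm₁ hm₂ μ).1 h
  refine (ae_eq_condExp_of_forall_setIntegral_eq hsup hI
    (fun _ _ _ => integrable_condExp.integrableOn) (fun s hs _ => ?_)
    (stronglyMeasurable_condExp.mono (le_sup_left : m' ≤ m' ⊔ m₁)).aestronglyMeasurable).symm
  refine setIntegral_eq_of_isPiSystem hsup (sup_eq_generateFrom_image2_inter m' m₁)
    ((@isPiSystem_measurableSet Ω m').image2_inter (@isPiSystem_measurableSet Ω m₁))
    integrable_condExp hI ?_ (integral_condExp hm') hs
  rintro _ ⟨u, hu, v, hv, rfl⟩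
  have hv' : MeasurableSet v := hm₁ v hv
  have hpull : μ[v.indicator (μ⟦t | m'⟧) | m'] =ᵐ[μ] μ⟦t | m'⟧ * μ⟦v | m'⟧ := by
    have hind : v.indicator (μ⟦t | m'⟧) = μ⟦t | m'⟧ * v.indicator fun _ => 1 := by
      ext ω; by_cases hω : ω ∈ v <;> simp [hω]
    rw [hind]
    exact condExp_mul_of_stronglyMeasurable_left stronglyMeasurable_condExp
      (hind ▸ integrable_condExp.indicator hv') ((integrable_const 1).indicator hv')
  calc ∫ ω in u ∩ v, (μ⟦t | m'⟧) ω ∂μ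
      = ∫ ω in u, μ[v.indicator (μ⟦t | m'⟧) | m'] ω ∂μ := by
        rw [setIntegral_condExp hm' (integrable_condExp.indicator hv') hu,
          setIntegral_indicator hv']
    _ = ∫ ω in u, (μ⟦v ∩ t | m'⟧) ω ∂μ := by
        refine setIntegral_congr_ae (hm' u hu) ?_
        filter_upwards [hpull, hmul v t hv ht] with ω h1 h2 _
        rw [h1, h2, Pi.mul_apply, Pi.mul_apply, mul_comm]
    _ = ∫ ω in u ∩ v, t.indicator (fun _ => (1 : ℝ)) ω ∂μ := by
        rw [setIntegral_condExp hm' ((integrable_const 1).indicator (hv'.inter (hm₂ t ht))) hu,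
          ← indicator_indicator, setIntegral_indicator hv']

lemma CondIndep.integral_indicator_div_condExp_mul (h : CondIndep m' m₁ m₂ hm' μ)
    (hm₁ : m₁ ≤ mΩ) (hm₂ : m₂ ≤ mΩ) {t : Set Ω} (ht : MeasurableSet[m₂] t) {Z : Ω → ℝ}
    (hZ : StronglyMeasurable[m₁] Z) (hpos : ∀ᵐ ω ∂μ, 0 < (μ⟦t | m'⟧) ω)
    (hint : Integrable (fun ω => t.indicator (fun _ => (1 : ℝ)) ω / (μ⟦t | m'⟧) ω * Z ω) μ) :
    ∫ ω, t.indicator (fun _ => (1 : ℝ)) ω / (μ⟦t | m'⟧) ω * Z ω ∂μ = ∫ ω, Z ω ∂μ := by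
  have hsup := h.condExp_indicator_sup_ae_eq hm₁ hm₂ ht
  have hcongr : (fun ω => t.indicator (fun _ => (1 : ℝ)) ω / (μ⟦t | m'⟧) ω * Z ω)
      =ᵐ[μ] fun ω => t.indicator (fun _ => (1 : ℝ)) ω / (μ⟦t | m' ⊔ m₁⟧) ω * Z ω := by
    filter_upwards [hsup] with ω hω
    rw [hω]
  rw [integral_congr_ae hcongr]
  refine integral_div_condExp_mul (sup_le hm' hm₁) (hZ.mono le_sup_right)
    ((integrable_const 1).indicator (hm₂ t ht)) ?_ (hint.congr hcongr)
  filter_upwards [hsup, hpos] with ω h1 h2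
  rwa [h1]

theorem integral_ipw_eq_integral_potentialOutcome {m : MeasurableSpace Ω} (hm : m ≤ mΩ)
    (hm'm : m' ≤ m) {β : Type*} [MeasurableSpace β] {A : Ω → β} (hA : Measurable[m] A)
    {s : Set β} (hs : MeasurableSet s) {R Y Ys p w : Ω → ℝ} (hY : StronglyMeasurable[m] Y)
    (hYs : ∀ ω, A ω ∈ s → Y ω = Ys ω) (hind : CondIndepFun m' hm' Ys A μ)
    (hYs_int : Integrable Ys μ) (hR_int : Integrable R μ) (hp : μ[R | m] =ᵐ[μ] p)
    (hp_pos : ∀ᵐ ω ∂μ, 0 < p ω) (hw : μ⟦A ⁻¹' s | m'⟧ =ᵐ[μ] w) (hw_pos : ∀ᵐ ω ∂μ, 0 < w ω)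
    (hint : Integrable (fun ω =>
      R ω / p ω * ((A ⁻¹' s).indicator (fun _ => (1 : ℝ)) ω * Y ω / w ω)) μ) :
    ∫ ω, R ω / p ω * ((A ⁻¹' s).indicator (fun _ => (1 : ℝ)) ω * Y ω / w ω) ∂μ
      = ∫ ω, Ys ω ∂μ := by
  set t := A ⁻¹' s
  -- `σ(Ys)` need not lie in `mΩ`, so independence is used through a measurable modification.
  set Ys' := hYs_int.1.mk Ys
  have hYs' : Ys =ᵐ[μ] Ys' := hYs_int.1.ae_eq_mk
  have hR : ∀ᵐ ω ∂μ, 0 < μ[R | m] ω := by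
    filter_upwards [hp, hp_pos] with ω h1 h2
    rwa [h1]
  have ht : ∀ᵐ ω ∂μ, 0 < (μ⟦t | m'⟧) ω := by
    filter_upwards [hw, hw_pos] with ω h1 h2
    rwa [h1]
  have hcondExp : (fun ω => R ω / p ω * (t.indicator (fun _ => (1 : ℝ)) ω * Y ω / w ω))
      =ᵐ[μ] fun ω => R ω / μ[R | m] ω *
        (t.indicator (fun _ => (1 : ℝ)) ω * Y ω / (μ⟦t | m'⟧) ω) := by
    filter_upwards [hp, hw] with ω h1 h2
    rw [h1, h2]
  have hg : StronglyMeasurable[m]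
      fun ω => t.indicator (fun _ => (1 : ℝ)) ω * Y ω / (μ⟦t | m'⟧) ω :=
    ((stronglyMeasurable_const.indicator (hA hs)).mul hY).div
      (stronglyMeasurable_condExp.mono hm'm)
  have hswap : (fun ω => t.indicator (fun _ => (1 : ℝ)) ω * Y ω / (μ⟦t | m'⟧) ω)
      =ᵐ[μ] fun ω => t.indicator (fun _ => (1 : ℝ)) ω / (μ⟦t | m'⟧) ω * Ys' ω := by
    filter_upwards [hYs'] with ω hω
    by_cases hωt : A ω ∈ s
    · simp [t, hωt, hYs ω hωt, hω, div_eq_inv_mul]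
    · simp [t, hωt]
  have hind' : CondIndep m' (.comap Ys' inferInstance) (.comap A inferInstance) hm' μ :=
    (condIndepFun_iff_condIndep _ _ _ _ _).1 (hind.congr_ae hYs' .rfl)
  have hint' := hint.congr hcondExp
  calc _ = ∫ ω, t.indicator (fun _ => (1 : ℝ)) ω * Y ω / (μ⟦t | m'⟧) ω ∂μ :=
        (integral_congr_ae hcondExp).trans (integral_div_condExp_mul hm hg hR_int hR hint')
    _ = ∫ ω, t.indicator (fun _ => (1 : ℝ)) ω / (μ⟦t | m'⟧) ω * Ys' ω ∂μ :=
        integral_congr_ae hswap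
    _ = ∫ ω, Ys' ω ∂μ :=
        hind'.integral_indicator_div_condExp_mul
          hYs_int.1.stronglyMeasurable_mk.measurable.comap_le (hA.comap_le.trans hm) ⟨s, hs, rfl⟩
          (comap_measurable Ys').stronglyMeasurable ht
          ((integrable_condExp.congr
            (condExp_div_condExp_mul_ae_eq hg hR_int hR hint')).congr hswap)
    _ = ∫ ω, Ys ω ∂μ := integral_congr_ae hYs'.symm

end ProbabilityTheory

/-- Under treatment-independent missingness `E[R|A,C,Y] = π(C,Y) > 0`,
overlap `0 < e(C) < 1` for the propensity score `e(C) = pr(A=1|C)`, consistency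
`Y = A·Y(1) + (1−A)·Y(0)`, and unconfoundedness `(Y(1),Y(0)) ⊥ A | C`, the
IPW population identities hold:
`E[(R/π(C,Y))·A·Y/e(C)] = E[Y(1)]` and `E[(R/π(C,Y))·(1−A)·Y/(1−e(C))] = E[Y(0)]`. -/
theorem wee_ipw_population_identity
    {Ω γ : Type*} [MeasurableSpace Ω] [StandardBorelSpace Ω] [MeasurableSpace γ]
    (μ : Measure Ω) [IsProbabilityMeasure μ]
    (A : Ω → Bool) (C : Ω → γ) (Y Y1 Y0 R : Ω → ℝ)
    (π : γ → ℝ → ℝ) (e : γ → ℝ)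
    (hmC : MeasurableSpace.comap C inferInstance ≤ (inferInstance : MeasurableSpace Ω))
    (hπpos : ∀ᵐ ω ∂μ, 0 < π (C ω) (Y ω))
    (hR : μ[R | MeasurableSpace.comap (fun ω => (A ω, C ω, Y ω)) inferInstance]
        =ᵐ[μ] fun ω => π (C ω) (Y ω))
    (he : μ[(fun ω => if A ω then (1:ℝ) else 0) | MeasurableSpace.comap C inferInstance]
        =ᵐ[μ] fun ω => e (C ω))
    (hoverlap : ∀ᵐ ω ∂μ, 0 < e (C ω) ∧ e (C ω) < 1)
    (hcons : ∀ ω, Y ω = if A ω then Y1 ω else Y0 ω)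
    (hunconf : CondIndepFun (MeasurableSpace.comap C inferInstance) hmC
        (fun ω => (Y1 ω, Y0 ω)) A μ)
    (hint1 : Integrable Y1 μ) (hint0 : Integrable Y0 μ)
    (hintw1 : Integrable (fun ω =>
      (R ω / π (C ω) (Y ω)) * ((if A ω then (1:ℝ) else 0) * Y ω / e (C ω))) μ)
    (hintw0 : Integrable (fun ω =>
      (R ω / π (C ω) (Y ω)) * ((if A ω then (0:ℝ) else 1) * Y ω / (1 - e (C ω)))) μ) :
    (∫ ω, (R ω / π (C ω) (Y ω)) * ((if A ω then (1:ℝ) else 0) * Y ω / e (C ω)) ∂μ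
        = ∫ ω, Y1 ω ∂μ)
    ∧ (∫ ω, (R ω / π (C ω) (Y ω)) * ((if A ω then (0:ℝ) else 1) * Y ω / (1 - e (C ω))) ∂μ
        = ∫ ω, Y0 ω ∂μ) := by
  have hR_pos : ∀ᵐ ω ∂μ, 0 < μ[R | .comap (fun ω => (A ω, C ω, Y ω)) inferInstance] ω := by
    filter_upwards [hR, hπpos] with ω h1 h2
    rwa [h1]
  obtain ⟨hm, hR_int⟩ := le_and_integrable_of_ae_condExp_pos hR_pos
  have hobs : Measurable[.comap (fun ω => (A ω, C ω, Y ω)) inferInstance]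
      fun ω => (A ω, C ω, Y ω) := comap_measurable _
  have he1 : μ⟦A ⁻¹' {true} | .comap C inferInstance⟧ =ᵐ[μ] fun ω => e (C ω) := by
    have hite : (A ⁻¹' {true}).indicator (fun _ => (1 : ℝ)) = fun ω => if A ω then 1 else 0 := by
      ext ω; by_cases hAω : A ω <;> simp [hAω]
    rwa [hite]
  have he0 : μ⟦A ⁻¹' {true}ᶜ | .comap C inferInstance⟧ =ᵐ[μ] fun ω => 1 - e (C ω) := by
    have htrue := hobs.fst.mono hm le_rfl (measurableSet_singleton true)
    filter_upwards [condExp_indicator_compl hmC htrue, he1] with ω h1 h2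
    rw [preimage_compl, h1, Pi.sub_apply, h2, Pi.one_apply]
  refine ⟨?_, ?_⟩
  · have h := integral_ipw_eq_integral_potentialOutcome (A := A) (Y := Y) hm
      hobs.snd.fst.comap_le hobs.fst (measurableSet_singleton true)
      hobs.snd.snd.stronglyMeasurable (fun ω h => by simp_all)
      (hunconf.comp measurable_fst measurable_id) hint1 hR_int hR hπpos he1
      (hoverlap.mono fun _ h => h.1)
    simp only [Set.indicator, mem_preimage, mem_singleton_iff] at h
    exact h hintw1
  -- The control arm is `A ∈ {true}ᶜ`, whose indicator unfolds to `if A ω then 0 else 1`.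
  · have h := integral_ipw_eq_integral_potentialOutcome (A := A) (Y := Y) hm
      hobs.snd.fst.comap_le hobs.fst (measurableSet_singleton true).compl
      hobs.snd.snd.stronglyMeasurable
      (fun ω h => by simp_all) (hunconf.comp measurable_snd measurable_id) hint0 hR_int hR hπpos
      he0 (hoverlap.mono fun _ h => sub_pos.2 h.2)
    simp only [Set.indicator, mem_preimage, mem_compl_iff, mem_singleton_iff, ite_not] at h
    exact h hintw0
end

section
/- Non-identifiability example: For the model C₁ ~ N(η,1), logit pr(A=1|c₁) = c₁² − 1, Y|a,c₁ ~ N(β₀ + β₁·a·|c₁|, φ), logit pr(R=1|c₁) = α₁·c₁, the two parameter sets (η,β₀,β₁,φ,α₁) = (1,0,1,1,−2) and (−1,0,1,1,2) induce identical observed-data distributions, i.e., the joint density of (A, C₁, Y) restricted to R=1 and of (A, Y) restricted to R=0 coincide under the two parameter sets. -/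
open Real

noncomputable section

/-- expit function. -/
def expit (t : ℝ) : ℝ := 1 / (1 + Real.exp (-t))

/-- Density of `N(m, φ)` at `x`. -/
def normPdf (m φ x : ℝ) : ℝ :=
  (1 / Real.sqrt (2 * Real.pi * φ)) * Real.exp (-(x - m) ^ 2 / (2 * φ))

/-- `pr(A = a | c₁)` for the model `logit pr(A=1|c₁) = c₁² − 1`, `a : Bool`. -/
def prAc (a : Bool) (c₁ : ℝ) : ℝ :=
  if a then expit (c₁ ^ 2 - 1) else 1 - expit (c₁ ^ 2 - 1)

/-- Outcome density `pr(y | a, c₁; β₀, β₁, φ)` of `N(β₀ + β₁·a·|c₁|, φ)`. -/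
def prYac (β₀ β₁ φ : ℝ) (a : Bool) (c₁ y : ℝ) : ℝ :=
  normPdf (β₀ + β₁ * (if a then 1 else 0) * |c₁|) φ y

/-- Observed-data density on `R = 1`:
`pr(c₁;η)·pr(a|c₁)·pr(y|a,c₁;β,φ)·pr(R=1|c₁;α₁)`. -/
def obsDensR1 (η β₀ β₁ φ α₁ : ℝ) (a : Bool) (c₁ y : ℝ) : ℝ :=
  normPdf η 1 c₁ * prAc a c₁ * prYac β₀ β₁ φ a c₁ y * expit (α₁ * c₁)

/-- Integrand of the observed-data density on `R = 0`:
`pr(c₁;η)·pr(a|c₁)·pr(y|a,c₁;β,φ)·(1 − pr(R=1|c₁;α₁))`. -/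
def obsDensR0Integrand (η β₀ β₁ φ α₁ : ℝ) (a : Bool) (c₁ y : ℝ) : ℝ :=
  normPdf η 1 c₁ * prAc a c₁ * prYac β₀ β₁ φ a c₁ y * (1 - expit (α₁ * c₁))

/-!
Both parameter sets have `β = (0, 1)`, `φ = 1` and `(η, α₁) = (η, -2η)` resp. `(-η, 2η)` with
`η = 1`. On `R = 1` the densities agree pointwise by exponential tilting: the likelihood ratio
`N(η,1)(c₁) / N(-η,1)(c₁) = exp (2ηc₁)` is exactly cancelled by
`expit (-2ηc₁) / expit (2ηc₁) = exp (-2ηc₁)`. On `R = 0` the two integrands are mirror images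
under `c₁ ↦ -c₁`, since `pr(a | c₁)` and `pr(y | a, c₁)` depend on `c₁` only through `c₁²` and
`|c₁|`, so their integrals over `ℝ` coincide.
-/

open MeasureTheory

lemma expit_eq_sigmoid : expit = sigmoid := by
  ext t
  rw [expit, sigmoid_def, one_div]

lemma normPdf_neg_neg (m φ x : ℝ) : normPdf (-m) φ (-x) = normPdf m φ x := by
  rw [normPdf, normPdf, neg_sub_neg, ← neg_sub, neg_sq]

lemma normPdf_eq_normPdf_neg_mul_exp (m φ x : ℝ) :
    normPdf m φ x = normPdf (-m) φ x * exp (2 * m * x / φ) := by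
  rw [normPdf, normPdf, mul_assoc _ (exp _), ← exp_add]
  ring_nf

lemma normPdf_mul_expit_neg_tilt (m φ x : ℝ) :
    normPdf m φ x * expit (-(2 * m * x / φ)) = normPdf (-m) φ x * expit (2 * m * x / φ) := by
  rw [normPdf_eq_normPdf_neg_mul_exp, expit_eq_sigmoid, ← sigmoid_mul_rexp_neg, mul_assoc,
    mul_left_comm (exp _), ← exp_add, add_neg_cancel, exp_zero, mul_one]

lemma prAc_neg (a : Bool) (c₁ : ℝ) : prAc a (-c₁) = prAc a c₁ := by
  rw [prAc, prAc, neg_sq]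

lemma prYac_neg (β₀ β₁ φ : ℝ) (a : Bool) (c₁ y : ℝ) :
    prYac β₀ β₁ φ a (-c₁) y = prYac β₀ β₁ φ a c₁ y := by
  rw [prYac, prYac, abs_neg]

lemma obsDensR1_tilt (η β₀ β₁ φ : ℝ) (a : Bool) (c₁ y : ℝ) :
    obsDensR1 η β₀ β₁ φ (-2 * η) a c₁ y = obsDensR1 (-η) β₀ β₁ φ (2 * η) a c₁ y := by
  have tilt := normPdf_mul_expit_neg_tilt η 1 c₁
  rw [div_one, ← neg_mul, ← neg_mul] at tilt
  simp only [obsDensR1]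
  linear_combination prAc a c₁ * prYac β₀ β₁ φ a c₁ y * tilt

lemma obsDensR0Integrand_neg (η β₀ β₁ φ α₁ : ℝ) (a : Bool) (c₁ y : ℝ) :
    obsDensR0Integrand (-η) β₀ β₁ φ (-α₁) a (-c₁) y = obsDensR0Integrand η β₀ β₁ φ α₁ a c₁ y := by
  rw [obsDensR0Integrand, obsDensR0Integrand, normPdf_neg_neg, prAc_neg, prYac_neg, neg_mul_neg]

lemma integral_obsDensR0Integrand_neg (η β₀ β₁ φ α₁ : ℝ) (a : Bool) (y : ℝ) :
    ∫ c₁, obsDensR0Integrand (-η) β₀ β₁ φ (-α₁) a c₁ y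
      = ∫ c₁, obsDensR0Integrand η β₀ β₁ φ α₁ a c₁ y := by
  rw [← integral_neg_eq_self]
  simp only [obsDensR0Integrand_neg]

/-- Non-identifiability example, Example 1: For the model
`C₁ ~ N(η,1)`, `logit pr(A=1|c₁) = c₁² − 1`, `Y|a,c₁ ~ N(β₀ + β₁·a·|c₁|, φ)`,
`logit pr(R=1|c₁) = α₁·c₁`, the parameter sets `(η,β₀,β₁,φ,α₁) = (1,0,1,1,−2)` and
`(−1,0,1,1,2)` induce identical observed-data distributions: the densities of
`(A, C₁, Y)` on `R=1` coincide pointwise, and the densities of `(A, Y)` on `R=0`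
(obtained by integrating out `c₁`) coincide. -/
theorem example_nonidentifiable_observed_distributions :
    (∀ (a : Bool) (c₁ y : ℝ),
      obsDensR1 1 0 1 1 (-2) a c₁ y = obsDensR1 (-1) 0 1 1 2 a c₁ y)
    ∧ (∀ (a : Bool) (y : ℝ),
      (∫ c₁ : ℝ, obsDensR0Integrand 1 0 1 1 (-2) a c₁ y)
        = ∫ c₁ : ℝ, obsDensR0Integrand (-1) 0 1 1 2 a c₁ y) := by
  refine ⟨fun a c₁ y ↦ ?_, fun a y ↦ ?_⟩
  · simpa using obsDensR1_tilt 1 0 1 1 a c₁ y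
  · simpa using (integral_obsDensR0Integrand_neg 1 0 1 1 (-2) a y).symm

end
end
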